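/- For Hurwitz continued fraction expansions, the continuant denominators satisfy the strict growth |qₙ| < |qₙ₊₁| for all n ≥ 0. -/

import Mathlib

/-- The nearest Gaussian integer to a complex number. -/
noncomputable def hFloor (z : ℂ) : ℂ :=
  (⌊z.re + 1/2⌋ : ℤ) + (⌊z.im + 1/2⌋ : ℤ) * Complex.I

/-- The Hurwitz Gauss map `T(z) = 1/z - [1/z]` (with `T 0 = 0`). -/
noncomputable def hT (z : ℂ) : ℂ := if z = 0 then 0 else z⁻¹ - hFloor z⁻¹

/-- `hDigit z n` is the Hurwitz continued fraction digit `a_{n+1}(z)`,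
obtained by applying `T` to the fractional part `z - [z]` of `z`. -/
noncomputable def hDigit (z : ℂ) (n : ℕ) : ℂ := hFloor ((hT^[n] (z - hFloor z))⁻¹)

/-- Continuant denominators: `hQ a n = qₙ` with `q₀ = 1`, `q₁ = a₁`,
`qₙ = aₙ qₙ₋₁ + qₙ₋₂` (here `a n` stands for the digit `a_{n+1}`). -/
noncomputable def hQ (a : ℕ → ℂ) : ℕ → ℂ
  | 0 => 1
  | 1 => a 0
  | (n + 2) => a (n + 1) * hQ a (n + 1) + hQ a n

namespace HurwitzAux

open Complex ComplexConjugate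

/-- Not in ℚ(i). -/
def NotQi (x : ℂ) : Prop := ∀ a b : ℚ, x ≠ (a : ℂ) + (b : ℂ) * Complex.I

lemma notQi_ne_zero {x : ℂ} (h : NotQi x) : x ≠ 0 := by
  intro h0
  exact h 0 0 (by simp [h0])

lemma notQi_inv {x : ℂ} (h : NotQi x) : NotQi x⁻¹ := by
  intro a b hab
  have hx : x ≠ 0 := notQi_ne_zero h
  have hgz : ((a:ℂ) + (b:ℂ) * Complex.I) ≠ 0 := by rw [← hab]; exact inv_ne_zero hx
  have hd : ((a:ℚ)^2 + (b:ℚ)^2) ≠ 0 := by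
    intro h0
    have ha : (a:ℚ) = 0 := by nlinarith [sq_nonneg (a:ℚ), sq_nonneg (b:ℚ)]
    have hb : (b:ℚ) = 0 := by nlinarith [sq_nonneg (a:ℚ), sq_nonneg (b:ℚ)]
    apply hgz
    rw [ha, hb]; simp
  have hdC : ((a:ℂ)^2 + (b:ℂ)^2) ≠ 0 := by
    intro h0
    apply hd
    have : (((a^2 + b^2 : ℚ)):ℂ) = 0 := by push_cast; push_cast at h0; linear_combination h0
    exact_mod_cast this
  apply h (a/(a^2+b^2)) (-b/(a^2+b^2))
  have hx2 : x = ((a:ℂ) + (b:ℂ) * Complex.I)⁻¹ := by rw [← hab, inv_inv]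
  rw [hx2]
  refine (eq_inv_of_mul_eq_one_left ?_).symm
  push_cast
  field_simp
  linear_combination (-(b:ℂ)^2) * Complex.I_sq

lemma notQi_sub_hFloor {x : ℂ} (h : NotQi x) (y : ℂ) : NotQi (x - hFloor y) := by
  intro a b hab
  apply h (a + ⌊y.re + 1/2⌋) (b + ⌊y.im + 1/2⌋)
  have hx : x = (x - hFloor y) + hFloor y := by ring
  rw [hx, hab, hFloor]
  push_cast
  ring

lemma notQi_hT {x : ℂ} (h : NotQi x) : NotQi (hT x) := by
  rw [hT, if_neg (notQi_ne_zero h)]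
  exact notQi_sub_hFloor (notQi_inv h) _

/-- The orbit of the fractional part under the Hurwitz Gauss map. -/
noncomputable def hW (z : ℂ) (n : ℕ) : ℂ := hT^[n] (z - hFloor z)

lemma hW_notQi {z : ℂ} (hz : NotQi z) : ∀ n, NotQi (hW z n)
  | 0 => notQi_sub_hFloor hz z
  | (n+1) => by
      rw [hW, Function.iterate_succ_apply']
      exact notQi_hT (hW_notQi hz n)

lemma hW_ne {z : ℂ} (hz : NotQi z) (n : ℕ) : hW z n ≠ 0 :=
  notQi_ne_zero (hW_notQi hz n)

lemma hDigit_eq (z : ℂ) (n : ℕ) : hDigit z n = hFloor (hW z n)⁻¹ := rfl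

lemma hW_succ {z : ℂ} (hz : NotQi z) (n : ℕ) :
    hW z (n+1) = (hW z n)⁻¹ - hDigit z n := by
  rw [hDigit_eq, hW, Function.iterate_succ_apply']
  show hT (hW z n) = _
  rw [hT, if_neg (hW_ne hz n)]

/-- Fractional part bounds. -/
lemma sqB (v : ℂ) :
    -(1/2) ≤ (v - hFloor v).re ∧ (v - hFloor v).re < 1/2 ∧
    -(1/2) ≤ (v - hFloor v).im ∧ (v - hFloor v).im < 1/2 := by
  have hre : (hFloor v).re = (⌊v.re + 1/2⌋ : ℝ) := by
    simp [hFloor]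
  have him : (hFloor v).im = (⌊v.im + 1/2⌋ : ℝ) := by
    simp [hFloor]
  have h1 : (⌊v.re + 1/2⌋ : ℝ) ≤ v.re + 1/2 := Int.floor_le _
  have h2 : v.re + 1/2 < ⌊v.re + 1/2⌋ + 1 := Int.lt_floor_add_one _
  have h3 : (⌊v.im + 1/2⌋ : ℝ) ≤ v.im + 1/2 := Int.floor_le _
  have h4 : v.im + 1/2 < ⌊v.im + 1/2⌋ + 1 := Int.lt_floor_add_one _
  refine ⟨?_, ?_, ?_, ?_⟩ <;> simp [Complex.sub_re, Complex.sub_im, hre, him] <;> linarith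

lemma hW_bounds {z : ℂ} (hz : NotQi z) (n : ℕ) :
    -(1/2) ≤ (hW z n).re ∧ (hW z n).re < 1/2 ∧
    -(1/2) ≤ (hW z n).im ∧ (hW z n).im < 1/2 := by
  cases n with
  | zero => exact sqB z
  | succ n =>
      have h := hW_succ hz n
      rw [hDigit_eq] at h
      rw [h]
      exact sqB _

lemma hW_nsq_le {z : ℂ} (hz : NotQi z) (n : ℕ) : normSq (hW z n) ≤ 1/2 := by
  obtain ⟨h1, h2, h3, h4⟩ := hW_bounds hz n
  rw [Complex.normSq_apply]
  nlinarith

lemma zeta_ge {z : ℂ} (hz : NotQi z) (n : ℕ) : 2 ≤ normSq (hW z n)⁻¹ := by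
  rw [Complex.normSq_inv]
  have h1 : 0 < normSq (hW z n) := Complex.normSq_pos.mpr (hW_ne hz n)
  have h2 := hW_nsq_le hz n
  have h3 : normSq (hW z n) * (normSq (hW z n))⁻¹ = 1 := mul_inv_cancel₀ (ne_of_gt h1)
  nlinarith [inv_pos.mpr h1]

/-- Integer components of the digits. -/
noncomputable def hAr (z : ℂ) (n : ℕ) : ℤ := ⌊((hW z n)⁻¹).re + 1/2⌋
noncomputable def hAi (z : ℂ) (n : ℕ) : ℤ := ⌊((hW z n)⁻¹).im + 1/2⌋

lemma hDigit_decomp (z : ℂ) (n : ℕ) :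
    hDigit z n = (hAr z n : ℂ) + (hAi z n : ℂ) * Complex.I := rfl

lemma nsqZ (a b : ℤ) : normSq ((a:ℂ) + (b:ℂ) * Complex.I) = ((a^2 + b^2 : ℤ) : ℝ) := by
  rw [Complex.normSq_apply]
  simp
  push_cast
  ring

lemma sq_ne_three (a b : ℤ) : a^2 + b^2 ≠ 3 := by
  intro h
  have ha : a^2 ≤ 3 := by nlinarith [sq_nonneg b]
  have hb : b^2 ≤ 3 := by nlinarith [sq_nonneg a]
  have ha1 : -1 ≤ a := by nlinarith
  have ha2 : a ≤ 1 := by nlinarith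
  have hb1 : -1 ≤ b := by nlinarith
  have hb2 : b ≤ 1 := by nlinarith
  interval_cases a <;> interval_cases b <;> omega

lemma digit_norm_aux (x y : ℝ) (A1 A2 : ℤ)
    (hQ2 : 2 ≤ x^2+y^2) (e1 : -(x^2+y^2) ≤ 2*x) (e2 : 2*x < x^2+y^2)
    (e3 : -(x^2+y^2) ≤ -(2*y)) (e4 : -(2*y) < x^2+y^2)
    (hAr1 : (A1:ℝ) ≤ x + 1/2) (hAr2 : x + 1/2 < (A1:ℝ)+1)
    (hAi1 : (A2:ℝ) ≤ y + 1/2) (hAi2 : y + 1/2 < (A2:ℝ)+1) : 2 ≤ A1^2 + A2^2 := by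
  by_contra hcon
  push_neg at hcon
  have har1 : -1 ≤ A1 := by nlinarith [sq_nonneg A1, sq_nonneg A2]
  have har2 : A1 ≤ 1 := by nlinarith [sq_nonneg A1, sq_nonneg A2]
  have hai1 : -1 ≤ A2 := by nlinarith [sq_nonneg A1, sq_nonneg A2]
  have hai2 : A2 ≤ 1 := by nlinarith [sq_nonneg A1, sq_nonneg A2]
  interval_cases A1 <;> interval_cases A2
  · norm_num at hcon
  · -- A1 = -1, A2 = 0
    push_cast at hAr1 hAr2 hAi1 hAi2
    nlinarith [mul_nonneg (by linarith : (0:ℝ) ≤ -x - 1/2) (by linarith : (0:ℝ) ≤ x + 3/2),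
               mul_nonneg (by linarith : (0:ℝ) ≤ 1/2 - y) (by linarith : (0:ℝ) ≤ y + 1/2), e1]
  · norm_num at hcon
  · -- A1 = 0, A2 = -1
    push_cast at hAr1 hAr2 hAi1 hAi2
    nlinarith [mul_nonneg (by linarith : (0:ℝ) ≤ -y - 1/2) (by linarith : (0:ℝ) ≤ y + 3/2),
               mul_nonneg (by linarith : (0:ℝ) ≤ 1/2 - x) (by linarith : (0:ℝ) ≤ x + 1/2), e4]
  · -- A1 = 0, A2 = 0
    push_cast at hAr1 hAr2 hAi1 hAi2
    nlinarith [mul_nonneg (by linarith : (0:ℝ) ≤ 1/2 - x) (by linarith : (0:ℝ) ≤ x + 1/2),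
               mul_nonneg (by linarith : (0:ℝ) ≤ 1/2 - y) (by linarith : (0:ℝ) ≤ y + 1/2), hQ2]
  · -- A1 = 0, A2 = 1
    push_cast at hAr1 hAr2 hAi1 hAi2
    nlinarith [mul_nonneg (by linarith : (0:ℝ) ≤ y - 1/2) (by linarith : (0:ℝ) ≤ 3/2 - y),
               mul_nonneg (by linarith : (0:ℝ) ≤ 1/2 - x) (by linarith : (0:ℝ) ≤ x + 1/2), e3]
  · norm_num at hcon
  · -- A1 = 1, A2 = 0
    push_cast at hAr1 hAr2 hAi1 hAi2
    nlinarith [mul_nonneg (by linarith : (0:ℝ) ≤ x - 1/2) (by linarith : (0:ℝ) ≤ 3/2 - x),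
               mul_nonneg (by linarith : (0:ℝ) ≤ 1/2 - y) (by linarith : (0:ℝ) ≤ y + 1/2), e2]
  · norm_num at hcon

/-- The digit has norm ≥ 2. -/
lemma digit_norm {z : ℂ} (hz : NotQi z) (n : ℕ) : 2 ≤ (hAr z n)^2 + (hAi z n)^2 := by
  set x := ((hW z n)⁻¹).re with hxdef
  set y := ((hW z n)⁻¹).im with hydef
  have hQ2 : 2 ≤ x^2 + y^2 := by
    have h := zeta_ge hz n
    rw [Complex.normSq_apply] at h
    nlinarith [h]
  have hwx : (hW z n).re = x / (x^2 + y^2) := by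
    rw [← inv_inv (hW z n), Complex.inv_re, Complex.normSq_apply, ← hxdef, ← hydef]
    ring_nf
  have hwy : (hW z n).im = -y / (x^2 + y^2) := by
    rw [← inv_inv (hW z n), Complex.inv_im, Complex.normSq_apply, ← hxdef, ← hydef]
    ring_nf
  have hQpos : (0:ℝ) < x^2 + y^2 := by linarith
  obtain ⟨h1, h2, h3, h4⟩ := hW_bounds hz n
  rw [hwx] at h1 h2
  rw [hwy] at h3 h4
  have e1 : -(x^2+y^2) ≤ 2*x := by
    have := (le_div_iff₀ hQpos).mp h1; nlinarith
  have e2 : 2*x < x^2+y^2 := by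
    have := (div_lt_iff₀ hQpos).mp h2; nlinarith
  have e3 : -(x^2+y^2) ≤ -(2*y) := by
    have := (le_div_iff₀ hQpos).mp h3; nlinarith
  have e4 : -(2*y) < x^2+y^2 := by
    have := (div_lt_iff₀ hQpos).mp h4; nlinarith
  exact digit_norm_aux x y _ _ hQ2 e1 e2 e3 e4 (Int.floor_le _) (Int.lt_floor_add_one _)
    (Int.floor_le _) (Int.lt_floor_add_one _)


/-- Key algebraic identity for inversions. -/
lemma gen_id (v c : ℂ) (hv : v ≠ 0) :
    normSq (v⁻¹ + c) * normSq v = 1 + normSq c * normSq v + 2 * (v * c).re := by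
  have h1 : v⁻¹ + c = (1 + c * v) * v⁻¹ := by field_simp
  have h2 : normSq v ≠ 0 := by simpa using hv
  rw [h1, Complex.normSq_mul, Complex.normSq_inv]
  rw [mul_assoc, inv_mul_cancel₀ h2, mul_one]
  rw [Complex.normSq_add, Complex.normSq_mul]
  simp [Complex.normSq_one]
  ring

/-- Inversion swaps the closed unit disk around `c` (|c|² = 2) with the one around `conj c`. -/
lemma inv2_lt (v c : ℂ) (hv : v ≠ 0) (hc : normSq c = 2) :
    normSq (v⁻¹ + c) < 1 ↔ normSq (v + conj c) < 1 := by
  have hg := gen_id v c hv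
  rw [hc] at hg
  have hnv : 0 < normSq v := Complex.normSq_pos.mpr hv
  have hexp : normSq (v + conj c) = normSq v + 2 + 2 * (v * c).re := by
    rw [Complex.normSq_add, Complex.normSq_conj, hc, Complex.conj_conj]
  constructor
  · intro h
    have := mul_lt_mul_of_pos_right h hnv
    rw [hg] at this
    nlinarith
  · intro h
    rw [hexp] at h
    have hlt : normSq (v⁻¹ + c) * normSq v < 1 * normSq v := by rw [hg]; nlinarith
    exact lt_of_mul_lt_mul_right (by linarith [hlt]) (le_of_lt hnv)

lemma inv2_gt (v c : ℂ) (hv : v ≠ 0) (hc : normSq c = 2) :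
    1 < normSq (v⁻¹ + c) ↔ 1 < normSq (v + conj c) := by
  have hg := gen_id v c hv
  rw [hc] at hg
  have hnv : 0 < normSq v := Complex.normSq_pos.mpr hv
  have hexp : normSq (v + conj c) = normSq v + 2 + 2 * (v * c).re := by
    rw [Complex.normSq_add, Complex.normSq_conj, hc, Complex.conj_conj]
  constructor
  · intro h
    have := mul_lt_mul_of_pos_right h hnv
    rw [hg] at this
    nlinarith
  · intro h
    rw [hexp] at h
    have hlt : 1 * normSq v < normSq (v⁻¹ + c) * normSq v := by rw [hg]; nlinarith
    exact lt_of_mul_lt_mul_right (by linarith [hlt]) (le_of_lt hnv)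

/-- Inversion of the closed unit disk around a unit `c` is a half plane. -/
lemma inv_unit (v c : ℂ) (hv : v ≠ 0) (hc : normSq c = 1)
    (h : normSq (v⁻¹ + c) < 1) : (v * c).re < -(1/2) := by
  have hg := gen_id v c hv
  rw [hc] at hg
  have hnv : 0 < normSq v := Complex.normSq_pos.mpr hv
  have := mul_lt_mul_of_pos_right h hnv
  rw [hg] at this
  nlinarith


lemma conjZ (a b : ℤ) :
    (starRingEnd ℂ) ((a:ℂ) + (b:ℂ) * Complex.I) = (a:ℂ) - (b:ℂ) * Complex.I := by
  simp only [map_add, map_mul, Complex.conj_I, map_intCast]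
  ring

/-- Key coupled-induction step: if the future orbit point lies in the unit ball
around `conj g` (|g|²=2), then the continuant ratio avoids the unit ball around `g`. -/
lemma Skey {z : ℂ} (hz : NotQi z) (j : ℕ) (rk : ℂ) (hrk : normSq rk < 1)
    (hS : ∀ gr gi : ℤ, gr ^ 2 + gi ^ 2 = 2 →
      normSq (hW z j + ((gr : ℂ) - (gi : ℂ) * Complex.I)) < 1 →
      1 < normSq (rk - ((gr : ℂ) + (gi : ℂ) * Complex.I)))
    (gr gi : ℤ) (hg : gr ^ 2 + gi ^ 2 = 2)
    (hw : normSq (hW z (j+1) + ((gr : ℂ) - (gi : ℂ) * Complex.I)) < 1) :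
    1 < normSq ((hDigit z j + rk) - ((gr : ℂ) - (gi : ℂ) * Complex.I)) := by
  have hwne : hW z j ≠ 0 := hW_ne hz j
  have hζ : normSq ((hW z j)⁻¹ + (((gr - hAr z j : ℤ):ℂ) + ((-gi - hAi z j : ℤ):ℂ) * Complex.I)) < 1 := by
    have he : hW z (j+1) + ((gr : ℂ) - (gi : ℂ) * Complex.I)
        = (hW z j)⁻¹ + (((gr - hAr z j : ℤ):ℂ) + ((-gi - hAi z j : ℤ):ℂ) * Complex.I) := by
      rw [hW_succ hz j, hDigit_decomp]
      push_cast
      ring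
    rwa [he] at hw
  have hgo : (hDigit z j + rk) - ((gr : ℂ) - (gi : ℂ) * Complex.I)
      = rk - (((gr - hAr z j : ℤ):ℂ) + ((-gi - hAi z j : ℤ):ℂ) * Complex.I) := by
    rw [hDigit_decomp]; push_cast; ring
  rw [hgo]
  set c1 : ℤ := gr - hAr z j with hc1
  set c2 : ℤ := -gi - hAi z j with hc2
  clear_value c1 c2
  rcases lt_trichotomy (c1^2 + c2^2) 2 with hm | hm | hm
  · -- c1² + c2² ≤ 1 : contradiction with the square bounds on the orbit
    exfalso
    have hb1 : -1 ≤ c1 := by nlinarith [sq_nonneg c1, sq_nonneg c2]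
    have hb2 : c1 ≤ 1 := by nlinarith [sq_nonneg c1, sq_nonneg c2]
    have hb3 : -1 ≤ c2 := by nlinarith [sq_nonneg c1, sq_nonneg c2]
    have hb4 : c2 ≤ 1 := by nlinarith [sq_nonneg c1, sq_nonneg c2]
    obtain ⟨w1, w2, w3, w4⟩ := hW_bounds hz j
    have hQge := zeta_ge hz j
    interval_cases c1 <;> interval_cases c2
    · norm_num at hm
    · -- c = -1
      have hζ' : normSq ((hW z j)⁻¹ + (-1 : ℂ)) < 1 := by
        have he : (((-1:ℤ):ℂ) + ((0:ℤ):ℂ) * Complex.I) = (-1 : ℂ) := by push_cast; ring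
        rwa [he] at hζ
      have hu := inv_unit _ _ hwne (by simp) hζ'
      rw [Complex.mul_re] at hu
      simp at hu
      linarith
    · norm_num at hm
    · -- c = -I
      have hζ' : normSq ((hW z j)⁻¹ + (-Complex.I : ℂ)) < 1 := by
        have he : (((0:ℤ):ℂ) + ((-1:ℤ):ℂ) * Complex.I) = (-Complex.I : ℂ) := by push_cast; ring
        rwa [he] at hζ
      have hu := inv_unit _ _ hwne (by simp) hζ'
      rw [Complex.mul_re] at hu
      simp at hu
      linarith
    · -- c = 0
      have hζ' : normSq ((hW z j)⁻¹) < 1 := by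
        have he : (((0:ℤ):ℂ) + ((0:ℤ):ℂ) * Complex.I) = (0 : ℂ) := by push_cast; ring
        rw [he, add_zero] at hζ
        exact hζ
      linarith
    · -- c = I
      have hζ' : normSq ((hW z j)⁻¹ + (Complex.I : ℂ)) < 1 := by
        have he : (((0:ℤ):ℂ) + ((1:ℤ):ℂ) * Complex.I) = (Complex.I : ℂ) := by push_cast; ring
        rwa [he] at hζ
      have hu := inv_unit _ _ hwne (by simp) hζ'
      rw [Complex.mul_re] at hu
      simp at hu
      linarith
    · norm_num at hm
    · -- c = 1
      have hζ' : normSq ((hW z j)⁻¹ + (1 : ℂ)) < 1 := by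
        have he : (((1:ℤ):ℂ) + ((0:ℤ):ℂ) * Complex.I) = (1 : ℂ) := by push_cast; ring
        rwa [he] at hζ
      have hu := inv_unit _ _ hwne (by simp) hζ'
      rw [Complex.mul_re] at hu
      simp at hu
      linarith
    · norm_num at hm
  · -- c1² + c2² = 2 : recurse through the induction hypothesis
    have hcc : normSq ((c1:ℂ) + (c2:ℂ) * Complex.I) = 2 := by
      rw [nsqZ]; exact_mod_cast hm
    have h2 := (inv2_lt (hW z j) ((c1:ℂ) + (c2:ℂ) * Complex.I) hwne hcc).mp hζ
    rw [conjZ] at h2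
    exact hS c1 c2 hm h2
  · -- c1² + c2² ≥ 4 : triangle inequality
    have hm4 : 4 ≤ c1^2 + c2^2 := by
      have := sq_ne_three c1 c2; omega
    have hnc : (4:ℝ) ≤ normSq ((c1:ℂ) + (c2:ℂ) * Complex.I) := by
      rw [nsqZ]; exact_mod_cast hm4
    set cc : ℂ := (c1:ℂ) + (c2:ℂ) * Complex.I with hccdef
    have habs : 2 ≤ ‖cc‖ := by
      nlinarith [Complex.sq_norm cc, norm_nonneg cc]
    have habr : ‖rk‖ < 1 := by
      nlinarith [Complex.sq_norm rk, norm_nonneg rk]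
    have htri : ‖cc‖ ≤ ‖(rk - cc)‖ + ‖rk‖ := by
      calc ‖cc‖ = ‖((cc - rk) + rk)‖ := by rw [sub_add_cancel]
        _ ≤ ‖(cc - rk)‖ + ‖rk‖ := norm_add_le _ _
        _ = ‖(rk - cc)‖ + ‖rk‖ := by rw [norm_sub_rev]
    nlinarith [Complex.sq_norm (rk - cc), norm_nonneg (rk - cc)]

/-- Growth: the denominator ratio `|a_{j+1} + r|` exceeds 1. -/
lemma growth {z : ℂ} (hz : NotQi z) (j : ℕ) (rk : ℂ) (hrk : normSq rk < 1)
    (hS : ∀ gr gi : ℤ, gr ^ 2 + gi ^ 2 = 2 →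
      normSq (hW z j + ((gr : ℂ) - (gi : ℂ) * Complex.I)) < 1 →
      1 < normSq (rk - ((gr : ℂ) + (gi : ℂ) * Complex.I))) :
    1 < normSq (hDigit z j + rk) := by
  have hd2 := digit_norm hz j
  have hvne := hW_ne hz j
  rcases eq_or_lt_of_le hd2 with hd | hd
  · -- digit of norm 2 : use the seed + induction hypothesis
    have hg : (-hAr z j)^2 + (-hAi z j)^2 = 2 := by ring_nf; omega
    have hc2 : normSq (((-hAr z j : ℤ):ℂ) - ((-hAi z j : ℤ):ℂ)*Complex.I) = 2 := by
      have he : (((-hAr z j : ℤ):ℂ) - ((-hAi z j : ℤ):ℂ)*Complex.I)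
          = ((-hAr z j : ℤ):ℂ) + ((hAi z j : ℤ):ℂ)*Complex.I := by push_cast; ring
      rw [he, nsqZ]
      have : (-hAr z j)^2 + (hAi z j)^2 = 2 := by ring_nf; omega
      exact_mod_cast this
    have hseed : normSq (hW z j + (((-hAr z j : ℤ):ℂ) - ((-hAi z j : ℤ):ℂ) * Complex.I)) < 1 := by
      have h := inv2_lt ((hW z j)⁻¹) (((-hAr z j : ℤ):ℂ) - ((-hAi z j : ℤ):ℂ)*Complex.I)
        (inv_ne_zero hvne) hc2
      rw [inv_inv] at h
      apply h.mpr
      have hre : (hW z j)⁻¹ + (starRingEnd ℂ) (((-hAr z j : ℤ):ℂ) - ((-hAi z j : ℤ):ℂ)*Complex.I)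
          = hW z (j+1) := by
        have he : (((-hAr z j : ℤ):ℂ) - ((-hAi z j : ℤ):ℂ)*Complex.I)
            = ((-hAr z j : ℤ):ℂ) + ((hAi z j : ℤ):ℂ)*Complex.I := by push_cast; ring
        rw [he, conjZ, hW_succ hz j, hDigit_decomp]
        push_cast
        ring
      rw [hre]
      linarith [hW_nsq_le hz (j+1)]
    have hres := hS (-hAr z j) (-hAi z j) hg hseed
    have heq : rk - (((-hAr z j : ℤ):ℂ) + ((-hAi z j : ℤ):ℂ)*Complex.I) = hDigit z j + rk := by
      rw [hDigit_decomp]; push_cast; ring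
    rwa [heq] at hres
  · -- digit of norm ≥ 4 : triangle inequality
    have hm4 : 4 ≤ (hAr z j)^2 + (hAi z j)^2 := by
      have := sq_ne_three (hAr z j) (hAi z j); omega
    have hnc : (4:ℝ) ≤ normSq (hDigit z j) := by
      rw [hDigit_decomp, nsqZ]; exact_mod_cast hm4
    have habs : 2 ≤ ‖(hDigit z j)‖ := by
      nlinarith [Complex.sq_norm (hDigit z j), norm_nonneg (hDigit z j)]
    have habr : ‖rk‖ < 1 := by
      nlinarith [Complex.sq_norm rk, norm_nonneg rk]
    have htri : ‖(hDigit z j)‖ ≤ ‖(hDigit z j + rk)‖ + ‖rk‖ := by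
      calc ‖(hDigit z j)‖ = ‖((hDigit z j + rk) - rk)‖ := by
            rw [add_sub_cancel_right]
        _ ≤ ‖(hDigit z j + rk)‖ + ‖rk‖ := by
            have h1 := norm_add_le (hDigit z j + rk) (-rk)
            simpa [sub_eq_add_neg] using h1
    nlinarith [Complex.sq_norm (hDigit z j + rk), norm_nonneg (hDigit z j + rk)]

end HurwitzAux

open Complex HurwitzAux in
/-- For any complex number not in `ℚ(i)`, the Hurwitz continuant denominators
grow strictly in absolute value: `|qₙ| < |qₙ₊₁|` for all `n ≥ 0`. -/
theorem stmt_4 (z : ℂ) (hirr : ∀ a b : ℚ, z ≠ (a : ℂ) + (b : ℂ) * Complex.I) :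
    ∀ n : ℕ, ‖(hQ (hDigit z) n)‖ < ‖(hQ (hDigit z) (n + 1))‖ := by
  have hz : NotQi z := hirr
  have key : ∀ k : ℕ,
      hQ (hDigit z) (k+1) ≠ 0 ∧
      ‖(hQ (hDigit z) k)‖ < ‖(hQ (hDigit z) (k+1))‖ ∧
      (∀ gr gi : ℤ, gr^2 + gi^2 = 2 →
        normSq (hW z (k+1) + ((gr:ℂ) - (gi:ℂ)*Complex.I)) < 1 →
        1 < normSq (hQ (hDigit z) k / hQ (hDigit z) (k+1) - ((gr:ℂ) + (gi:ℂ)*Complex.I))) := by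
    intro k
    induction k with
    | zero =>
        have hQ0 : hQ (hDigit z) 0 = 1 := rfl
        have hQ1 : hQ (hDigit z) 1 = hDigit z 0 := rfl
        have hS0 : ∀ gr gi : ℤ, gr^2+gi^2 = 2 →
            normSq (hW z 0 + ((gr:ℂ) - (gi:ℂ)*Complex.I)) < 1 →
            1 < normSq ((0:ℂ) - ((gr:ℂ) + (gi:ℂ)*Complex.I)) := by
          intro gr gi hg _
          rw [zero_sub, Complex.normSq_neg, nsqZ]
          exact_mod_cast (by omega : (1:ℤ) < gr^2+gi^2)
        have hgr := growth hz 0 0 (by simp) hS0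
        rw [add_zero] at hgr
        have hne : hDigit z 0 ≠ 0 := by
          intro h0; rw [h0] at hgr; simp at hgr; linarith
        refine ⟨by rw [hQ1]; exact hne, ?_, ?_⟩
        · rw [hQ0, hQ1]
          have h1 : ‖(1:ℂ)‖ = 1 := by simp
          rw [h1]
          nlinarith [Complex.sq_norm (hDigit z 0), norm_nonneg (hDigit z 0)]
        · intro gr gi hg hw
          have hkey := Skey hz 0 0 (by simp) hS0 gr gi hg hw
          rw [add_zero] at hkey
          rw [hQ0, hQ1]
          have hrw : (1:ℂ) / hDigit z 0 - ((gr:ℂ) + (gi:ℂ)*Complex.I)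
              = (hDigit z 0)⁻¹ + (-(((gr:ℂ) + (gi:ℂ)*Complex.I))) := by
            rw [one_div]; ring
          rw [hrw]
          have hc2 : normSq (-(((gr:ℂ) + (gi:ℂ)*Complex.I))) = 2 := by
            rw [Complex.normSq_neg, nsqZ]; exact_mod_cast hg
          rw [inv2_gt _ _ hne hc2]
          have heq : hDigit z 0 + (starRingEnd ℂ) (-(((gr:ℂ) + (gi:ℂ)*Complex.I)))
              = hDigit z 0 - ((gr:ℂ) - (gi:ℂ)*Complex.I) := by
            rw [map_neg, conjZ]; ring
          rw [heq]
          exact hkey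
    | succ k ih =>
        obtain ⟨h1, h2, hS⟩ := ih
        have habsr : ‖(hQ (hDigit z) k / hQ (hDigit z) (k+1))‖ < 1 := by
          rw [norm_div]
          have hpos : 0 < ‖(hQ (hDigit z) (k+1))‖ := by
            have := norm_nonneg (hQ (hDigit z) k); linarith
          rw [div_lt_one hpos]; exact h2
        have hnr : normSq (hQ (hDigit z) k / hQ (hDigit z) (k+1)) < 1 := by
          nlinarith [Complex.sq_norm (hQ (hDigit z) k / hQ (hDigit z) (k+1)),
            norm_nonneg (hQ (hDigit z) k / hQ (hDigit z) (k+1))]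
        have hgr := growth hz (k+1) (hQ (hDigit z) k / hQ (hDigit z) (k+1)) hnr hS
        have hZne : hDigit z (k+1) + hQ (hDigit z) k / hQ (hDigit z) (k+1) ≠ 0 := by
          intro h0; rw [h0] at hgr; simp at hgr; linarith
        have hQ2eq : hQ (hDigit z) (k+2)
            = hQ (hDigit z) (k+1) * (hDigit z (k+1) + hQ (hDigit z) k / hQ (hDigit z) (k+1)) := by
          show hDigit z (k+1) * hQ (hDigit z) (k+1) + hQ (hDigit z) k = _
          field_simp
          try ring
        have hQ2ne : hQ (hDigit z) (k+2) ≠ 0 := by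
          rw [hQ2eq]; exact mul_ne_zero h1 hZne
        have habsZ : 1 < ‖(hDigit z (k+1) + hQ (hDigit z) k / hQ (hDigit z) (k+1))‖ := by
          nlinarith [Complex.sq_norm (hDigit z (k+1) + hQ (hDigit z) k / hQ (hDigit z) (k+1)),
            norm_nonneg (hDigit z (k+1) + hQ (hDigit z) k / hQ (hDigit z) (k+1))]
        refine ⟨hQ2ne, ?_, ?_⟩
        · rw [hQ2eq, norm_mul]
          have hpos : 0 < ‖(hQ (hDigit z) (k+1))‖ := by
            have := norm_nonneg (hQ (hDigit z) k); linarith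
          nlinarith
        · intro gr gi hg hw
          have hkey := Skey hz (k+1) (hQ (hDigit z) k / hQ (hDigit z) (k+1)) hnr hS gr gi hg hw
          have hrq : hQ (hDigit z) (k+1) / hQ (hDigit z) (k+2)
              = (hDigit z (k+1) + hQ (hDigit z) k / hQ (hDigit z) (k+1))⁻¹ := by
            rw [hQ2eq]
            exact div_mul_cancel_left₀ h1 _
          rw [hrq]
          have hrw : (hDigit z (k+1) + hQ (hDigit z) k / hQ (hDigit z) (k+1))⁻¹
                - ((gr:ℂ) + (gi:ℂ)*Complex.I)
              = (hDigit z (k+1) + hQ (hDigit z) k / hQ (hDigit z) (k+1))⁻¹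
                + (-(((gr:ℂ) + (gi:ℂ)*Complex.I))) := by ring
          rw [hrw]
          have hc2 : normSq (-(((gr:ℂ) + (gi:ℂ)*Complex.I))) = 2 := by
            rw [Complex.normSq_neg, nsqZ]; exact_mod_cast hg
          rw [inv2_gt _ _ hZne hc2]
          have heq : (hDigit z (k+1) + hQ (hDigit z) k / hQ (hDigit z) (k+1))
                + (starRingEnd ℂ) (-(((gr:ℂ) + (gi:ℂ)*Complex.I)))
              = (hDigit z (k+1) + hQ (hDigit z) k / hQ (hDigit z) (k+1))
                - ((gr:ℂ) - (gi:ℂ)*Complex.I) := by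
            rw [map_neg, conjZ]; ring
          rw [heq]
          exact hkey
  intro n
  exact (key n).2.1
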